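/- Assume in addition that A is a noetherian local ring with maximal ideal m and residue field k = A/m, and that the ideal of reducibility BC equals m. Let χ₁, χ₂ : G → kˣ be the characters given by the reductions of a and d modulo m, and suppose dim_k H¹(G, k(χ₁χ₂⁻¹)) = 1 and dim_k H¹(G, k(χ₂χ₁⁻¹)) = 1 (i.e. Ext¹_{k[G]}(χ₂, χ₁) and Ext¹_{k[G]}(χ₁, χ₂) are one-dimensional over k). Then the maximal ideal m of A is principal. If moreover the residue field k has positive characteristic p and A admits a surjective ring homomorphism onto a nonzero ring of characteristic zero, then A is a discrete valuation ring. -/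

import Mathlib

set_option linter.unusedRCasesPattern false

/-- The rank-one representation of `G` on `k` attached to a character `χ : G → kˣ`:
`g` acts on `k` by multiplication by `χ g`. -/
noncomputable def charRep {k : Type*} [CommRing k] {G : Type*} [Group G] (χ : G →* kˣ) :
    Representation k G k where
  toFun g :=
    { toFun := fun x => (χ g : k) * x
      map_add' := fun x y => by ring
      map_smul' := fun c x => by simp [smul_eq_mul]; ring }
  map_one' := by ext x; simp
  map_mul' g h := by ext x; simp [Module.End.mul_apply, mul_assoc]

universe u

/-!
For a linear form `ψ` on `B/𝔪B`, the function `g ↦ ψ(b g) χ₂(g)⁻¹` is a `1`-cocycle with values in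
`k(χ₁χ₂⁻¹)`, because `b(gh) = a(g) b(h) + b(g) d(h)`. It is a coboundary only if `ψ = 0`: a
coboundary of a character vanishes identically as soon as it vanishes at some `s` with
`χ₁(s) ≠ χ₂(s)`. Hence `dim_k B/𝔪B ≤ 1`, so `B` is principal by Nakayama; so is `C`, and then so
is `𝔪 = BC`.

In the mixed characteristic case the generator `t` of `𝔪` divides `p`, which is not nilpotent since
its image in a ring of characteristic zero is not. By Krull's intersection theorem every nonzero
element is then a unit times a power of `t`, so `A` is a domain, and a noetherian local domain with
principal maximal ideal is a discrete valuation ring.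
-/

open IsLocalRing Module

theorem Submodule.isPrincipal_of_spanFinrank_le_one {R M : Type*} [Semiring R] [AddCommMonoid M]
    [Module R M] {p : Submodule R M} (fg : p.FG) (h : p.spanFinrank ≤ 1) : p.IsPrincipal := by
  rcases Nat.le_one_iff_eq_zero_or_eq_one.mp h with h | h
  · rw [(spanFinrank_eq_zero_iff_eq_bot fg).mp h]
    infer_instance
  · exact ((spanFinrank_eq_one_iff p).mp h).1

theorem IsLocalRing.isPrincipal_of_finrank_linearMap_residueField_le_one {A M : Type*}
    [CommRing A] [IsLocalRing A] [AddCommGroup M] [Module A M] {N : Submodule A M} (fg : N.FG)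
    (h : finrank (ResidueField A) (N →ₗ[A] ResidueField A) ≤ 1) : N.IsPrincipal := by
  have : Module.Finite A N := Module.Finite.iff_fg.mpr fg
  rw [(LinearMap.liftBaseChangeEquiv (ResidueField A)).finrank_eq, Subspace.dual_finrank_eq,
    finrank_eq_spanFinrank_of_free, TensorProduct.spanFinrank_top_eq_of_residueField N fg] at h
  exact Submodule.isPrincipal_of_spanFinrank_le_one fg h

theorem not_isNilpotent_natCast {R : Type*} [Semiring R] [CharZero R] {n : ℕ} (hn : n ≠ 0) :
    ¬IsNilpotent (n : R) := by
  rintro ⟨N, hN⟩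
  exact pow_ne_zero N hn (by exact_mod_cast hN)

theorem not_isNilpotent_of_dvd_natCast {A B : Type*} [CommRing A] [CommRing B] [CharZero B]
    (f : A →+* B) {n : ℕ} (hn : n ≠ 0) {t : A} (ht : t ∣ n) : ¬IsNilpotent t := by
  rintro hnil
  obtain ⟨c, hc⟩ := ht
  refine not_isNilpotent_natCast (R := B) hn ?_
  rw [← map_natCast f, hc]
  exact ((Commute.all t c).isNilpotent_mul_right hnil).map f

namespace IsLocalRing

variable {A : Type*} [CommRing A] [IsLocalRing A] [IsNoetherianRing A] {t : A}

theorem exists_isUnit_mul_pow_eq_of_maximalIdeal_eq_span (ht : maximalIdeal A = Ideal.span {t})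
    {x : A} (hx : x ≠ 0) : ∃ (u : A) (n : ℕ), IsUnit u ∧ u * t ^ n = x := by
  have hfin : FiniteMultiplicity t x := by
    by_contra hinf
    refine hx (Ideal.mem_bot.mp ?_)
    rw [← Ideal.iInf_pow_eq_bot_of_isLocalRing _ (maximalIdeal.isMaximal A).ne_top,
      Submodule.mem_iInf]
    intro n
    rw [ht, Ideal.span_singleton_pow, Ideal.mem_span_singleton]
    exact (FiniteMultiplicity.not_iff_forall.mp hinf) n
  obtain ⟨u, hu⟩ := pow_multiplicity_dvd t x
  set n := multiplicity t x
  refine ⟨u, n, ?_, by rw [hu, mul_comm]⟩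
  by_contra hu'
  obtain ⟨e, rfl⟩ := Ideal.mem_span_singleton'.mp (ht ▸ (mem_maximalIdeal u).mpr hu')
  have hdvd : t ^ (n + 1) ∣ x := ⟨e, by rw [hu]; ring⟩
  exact hfin.not_pow_dvd_of_multiplicity_lt (lt_add_one n) hdvd

theorem isDomain_of_maximalIdeal_eq_span (ht : maximalIdeal A = Ideal.span {t})
    (hnil : ¬IsNilpotent t) : IsDomain A := by
  refine @NoZeroDivisors.to_isDomain A _ _ ⟨fun {x y} hxy => ?_⟩
  by_contra! hne
  obtain ⟨u, m, hu, rfl⟩ := exists_isUnit_mul_pow_eq_of_maximalIdeal_eq_span ht hne.1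
  obtain ⟨v, n, hv, rfl⟩ := exists_isUnit_mul_pow_eq_of_maximalIdeal_eq_span ht hne.2
  refine hnil ⟨m + n, (hu.mul hv).mul_right_eq_zero.mp ?_⟩
  rw [← hxy]
  ring

theorem isDomain_isPrincipalIdealRing_not_isField_of_maximalIdeal_eq_span
    (ht : maximalIdeal A = Ideal.span {t}) (hnil : ¬IsNilpotent t) :
    IsDomain A ∧ IsPrincipalIdealRing A ∧ ¬IsField A := by
  have hdomain := isDomain_of_maximalIdeal_eq_span ht hnil
  have hfield : ¬IsField A := by
    rw [isField_iff_maximalIdeal_eq, ht, Ideal.span_singleton_eq_bot]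
    rintro rfl
    exact hnil IsNilpotent.zero
  have hprincipal : (maximalIdeal A).IsPrincipal := ⟨t, ht⟩
  exact ⟨hdomain,
    ((tfae_of_isNoetherianRing_of_isLocalRing_of_isDomain A).out 0 4).mpr hprincipal, hfield⟩

end IsLocalRing

open groupCohomology

section OffDiagonal

variable {A M : Type*} {k G : Type u} [CommRing A] [CommRing k] [Algebra A k] [Group G]
  [AddCommGroup M] [Module A M]

theorem eq_zero_of_mem_coboundaries₁_charRep {χ : G →* kˣ} {f : G → k}
    (hf : f ∈ coboundaries₁ (Rep.of (charRep χ))) {s : G} (hs : f s = 0)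
    (hunit : IsUnit ((χ s : k) - 1)) : f = 0 := by
  obtain ⟨y, rfl⟩ := hf
  have hy : ∀ g, (d₀₁ (Rep.of (charRep χ))).hom y g = ((χ g : k) - 1) * y := fun g => by
    rw [d₀₁_hom_apply]
    show (χ g : k) * y - y = _
    ring
  have hy0 : y = 0 := hunit.mul_right_eq_zero.mp (hy s ▸ hs)
  funext g
  rw [hy, hy0, mul_zero]
  rfl

variable (χ₂ : G →* kˣ) (β : G → M)

def offDiagonalCochain : (M →ₗ[A] k) →ₗ[k] G → k where
  toFun ψ g := ψ (β g) * ↑(χ₂ g)⁻¹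
  map_add' ψ ψ' := by
    funext g
    simp only [LinearMap.add_apply, Pi.add_apply, add_mul]
  map_smul' c ψ := by
    funext g
    simp only [LinearMap.smul_apply, smul_eq_mul, RingHom.id_apply, Pi.smul_apply, mul_assoc]

variable {χ₂ β} {χ₁ : G →* kˣ} {a d : G → A}

theorem offDiagonalCochain_mem_cocycles₁ (hβ : ∀ g h, β (g * h) = a g • β h + d h • β g)
    (hχ₁ : ∀ g, (χ₁ g : k) = algebraMap A k (a g)) (hχ₂ : ∀ g, (χ₂ g : k) = algebraMap A k (d g))
    (ψ : M →ₗ[A] k) : offDiagonalCochain χ₂ β ψ ∈ cocycles₁ (Rep.of (charRep (χ₁ * χ₂⁻¹))) := by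
  rw [mem_cocycles₁_iff]
  intro g h
  show ψ (β (g * h)) * ↑(χ₂ (g * h))⁻¹ =
    ((χ₁ * χ₂⁻¹) g : k) * (ψ (β h) * ↑(χ₂ h)⁻¹) + ψ (β g) * ↑(χ₂ g)⁻¹
  rw [hβ, map_add, LinearMap.map_smul_of_tower, LinearMap.map_smul_of_tower, Algebra.smul_def,
    Algebra.smul_def, ← hχ₁, ← hχ₂]
  simp only [map_mul, mul_inv_rev, MonoidHom.mul_apply, MonoidHom.inv_apply, Units.val_mul]
  linear_combination ψ (β g) * ((χ₂ g)⁻¹ : kˣ) * (χ₂ h).mul_inv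

noncomputable def offDiagonalH1 (hβ : ∀ g h, β (g * h) = a g • β h + d h • β g)
    (hχ₁ : ∀ g, (χ₁ g : k) = algebraMap A k (a g)) (hχ₂ : ∀ g, (χ₂ g : k) = algebraMap A k (d g)) :
    (M →ₗ[A] k) →ₗ[k] H1 (Rep.of (charRep (χ₁ * χ₂⁻¹))) :=
  (H1π _).hom ∘ₗ
    (offDiagonalCochain χ₂ β).codRestrict _ (offDiagonalCochain_mem_cocycles₁ hβ hχ₁ hχ₂)

theorem offDiagonalH1_injective (hβ : ∀ g h, β (g * h) = a g • β h + d h • β g)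
    (hχ₁ : ∀ g, (χ₁ g : k) = algebraMap A k (a g)) (hχ₂ : ∀ g, (χ₂ g : k) = algebraMap A k (d g))
    (hspan : Submodule.span A (Set.range β) = ⊤) {s : G} (hs : β s = 0)
    (hunit : IsUnit (algebraMap A k (a s - d s))) :
    Function.Injective (offDiagonalH1 hβ hχ₁ hχ₂) := by
  rw [injective_iff_map_eq_zero]
  intro ψ hψ
  have hcob : offDiagonalCochain χ₂ β ψ ∈ coboundaries₁ (Rep.of (charRep (χ₁ * χ₂⁻¹))) :=
    (H1π_eq_zero_iff _).mp hψ
  have hunit' : IsUnit (((χ₁ * χ₂⁻¹) s : k) - 1) := by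
    have : ((χ₁ * χ₂⁻¹) s : k) - 1 = algebraMap A k (a s - d s) * ((χ₂ s)⁻¹ : kˣ) := by
      simp only [MonoidHom.mul_apply, MonoidHom.inv_apply, Units.val_mul, map_sub, ← hχ₁, ← hχ₂]
      linear_combination (χ₂ s).mul_inv
    rw [this]
    exact hunit.mul (Units.isUnit _)
  have hzero := eq_zero_of_mem_coboundaries₁_charRep hcob
    (by simp [offDiagonalCochain, hs]) hunit'
  refine LinearMap.ext_on_range hspan fun g => ?_
  simpa [offDiagonalCochain] using congrFun hzero g

end OffDiagonal

section Reducibility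

variable {A G : Type u} [CommRing A] [IsLocalRing A] [IsNoetherianRing A] [Group G]

theorem isPrincipal_span_range_of_finrank_H1_eq_one {a b d : G → A}
    (hb : ∀ g h, b (g * h) = a g * b h + b g * d h) {s : G} (hs : b s = 0)
    (hunit : IsUnit (a s - d s)) {χ₁ χ₂ : G →* (ResidueField A)ˣ}
    (hχ₁ : ∀ g, (χ₁ g : ResidueField A) = residue A (a g))
    (hχ₂ : ∀ g, (χ₂ g : ResidueField A) = residue A (d g))
    (hdim : Module.finrank (ResidueField A) (H1 (Rep.of (charRep (χ₁ * χ₂⁻¹)))) = 1) :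
    (Ideal.span (Set.range b)).IsPrincipal := by
  let β : G → Ideal.span (Set.range b) := fun g => ⟨b g, Ideal.subset_span ⟨g, rfl⟩⟩
  have hβ : ∀ g h, β (g * h) = a g • β h + d h • β g := fun g h => by
    ext
    simp only [β, hb, Submodule.coe_add, Submodule.coe_smul, smul_eq_mul]
    ring
  have hspan : Submodule.span A (Set.range β) = ⊤ := by
    convert Submodule.span_span_coe_preimage (R := A) (s := Set.range b)
    ext x
    simp [β, Subtype.ext_iff]
  have : Module.Finite (ResidueField A) (H1 (Rep.of (charRep (χ₁ * χ₂⁻¹)))) :=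
    Module.finite_of_finrank_eq_succ hdim
  refine isPrincipal_of_finrank_linearMap_residueField_le_one (IsNoetherian.noetherian _) ?_
  rw [← hdim]
  exact LinearMap.finrank_le_finrank_of_injective
    (offDiagonalH1_injective hβ hχ₁ hχ₂ hspan (Subtype.ext hs) (hunit.map _))

end Reducibility

/-- Let `A` be a noetherian local ring with maximal ideal `m` and residue
field `k`, and `ρ : G → GL₂(A)` with `ρ s` diagonal and `λ₁ - λ₂` a unit.  Suppose the
ideal of reducibility `BC` equals `m`, and let `χ₁, χ₂ : G → kˣ` be the reductions of the
diagonal entries mod `m`.  If `H¹(G, k(χ₁χ₂⁻¹))` and `H¹(G, k(χ₂χ₁⁻¹))` are one-dimensional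
over `k`, then `m` is principal; and if moreover `k` has positive characteristic `p` and
`A` surjects onto a nonzero ring of characteristic zero, then `A` is a discrete valuation
ring (a local principal ideal domain that is not a field). -/
theorem stmt_4 {A G : Type u} [CommRing A] [IsNoetherianRing A] [IsLocalRing A] [Group G]
    (ρ : G →* Matrix (Fin 2) (Fin 2) A)
    (s : G) (h01 : ρ s 0 1 = 0) (h10 : ρ s 1 0 = 0)
    (hunit : IsUnit (ρ s 0 0 - ρ s 1 1))
    (hBC : Ideal.span (Set.range fun g : G => ρ g 0 1) *
        Ideal.span (Set.range fun g : G => ρ g 1 0) = IsLocalRing.maximalIdeal A)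
    (χ₁ χ₂ : G →* (IsLocalRing.ResidueField A)ˣ)
    (hχ₁ : ∀ g : G, (χ₁ g : IsLocalRing.ResidueField A) = IsLocalRing.residue A (ρ g 0 0))
    (hχ₂ : ∀ g : G, (χ₂ g : IsLocalRing.ResidueField A) = IsLocalRing.residue A (ρ g 1 1))
    (hdim1 : Module.finrank (IsLocalRing.ResidueField A)
      (groupCohomology.H1 (Rep.of (charRep (χ₁ * χ₂⁻¹)))) = 1)
    (hdim2 : Module.finrank (IsLocalRing.ResidueField A)
      (groupCohomology.H1 (Rep.of (charRep (χ₂ * χ₁⁻¹)))) = 1) :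
    (IsLocalRing.maximalIdeal A).IsPrincipal ∧
    (∀ p : ℕ, 0 < p → CharP (IsLocalRing.ResidueField A) p →
      ∀ (B₀ : Type u) [CommRing B₀] [Nontrivial B₀] [CharZero B₀],
      ∀ f : A →+* B₀, Function.Surjective f →
      IsDomain A ∧ IsPrincipalIdealRing A ∧ ¬ IsField A) := by
  have hB := isPrincipal_span_range_of_finrank_H1_eq_one (a := fun g => ρ g 0 0)
    (b := fun g => ρ g 0 1) (d := fun g => ρ g 1 1)
    (fun g h => by simp [Matrix.mul_apply, Fin.sum_univ_two]) h01 hunit hχ₁ hχ₂ hdim1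
  have hC := isPrincipal_span_range_of_finrank_H1_eq_one (a := fun g => ρ g 1 1)
    (b := fun g => ρ g 1 0) (d := fun g => ρ g 0 0)
    (fun g h => by simp [Matrix.mul_apply, Fin.sum_univ_two]; ring) h10
    (by simpa using hunit.neg) hχ₂ hχ₁ hdim2
  obtain ⟨x, hx⟩ := hB
  obtain ⟨y, hy⟩ := hC
  have hm : maximalIdeal A = Ideal.span {x * y} := by
    rw [← hBC, hx, hy, Ideal.submodule_span_eq, Ideal.submodule_span_eq,
      Ideal.span_singleton_mul_span_singleton]
  refine ⟨⟨x * y, hm⟩, fun p hp _ B₀ _ _ _ f _ => ?_⟩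
  have hp_mem : (p : A) ∈ maximalIdeal A := by
    rw [← residue_eq_zero_iff, map_natCast, CharP.cast_eq_zero]
  refine isDomain_isPrincipalIdealRing_not_isField_of_maximalIdeal_eq_span hm
    (not_isNilpotent_of_dvd_natCast f hp.ne' ?_)
  rwa [← Ideal.mem_span_singleton, ← hm]
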